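/- The function (x,y) ↦ (x-y)⁴ / sinh²((x-y)/2) · 1/(γ0(x)γ0(y)) is integrable over ℝ², where γ0(x) = ∫_ℝ (n0(t)+f0(t+x))t²sgn(t) dt. Hence the rescaled kernel K̂0(x,y) = √(w(x)γ0(x))·K̄0(x,y)/(γ0(x)√(w(y)γ0(y))) is Hilbert–Schmidt on L²(ℝ). -/
import Mathlib


open MeasureTheory Real

noncomputable def f0 (x : ℝ) : ℝ := 1 / (Real.exp x + 1)
noncomputable def n0 (y : ℝ) : ℝ := 1 / (Real.exp y - 1)
noncomputable def w (x : ℝ) : ℝ := f0 x * (1 - f0 x)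
noncomputable def k0 (x y : ℝ) : ℝ := (n0 y + f0 (y + x)) * y ^ 2 * Real.sign y
noncomputable def K0bar (e u : ℝ) : ℝ := (n0 (u - e) + f0 u) * (u - e) ^ 2 * Real.sign (u - e)
noncomputable def Gamma0 (e : ℝ) : ℝ := ∫ u, K0bar e u
noncomputable def gamma0 (x : ℝ) : ℝ := ∫ y, k0 x y

noncomputable def Khat0 (x y : ℝ) : ℝ :=
  Real.sqrt (w x * gamma0 x) * (K0bar x y / gamma0 x) / Real.sqrt (w y * gamma0 y)

/-! ### Elementary properties of `f0`, `n0`, `w` -/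

lemma f0_pos (x : ℝ) : 0 < f0 x := by
  unfold f0; positivity

lemma f0_lt_one (x : ℝ) : f0 x < 1 := by
  unfold f0
  rw [div_lt_one (by positivity)]
  linarith [Real.exp_pos x]

lemma w_pos (x : ℝ) : 0 < w x := by
  unfold w
  have := f0_pos x; have := f0_lt_one x
  nlinarith

lemma f0_le_exp_neg (x : ℝ) : f0 x ≤ Real.exp (-x) := by
  unfold f0
  rw [Real.exp_neg, div_le_iff₀ (by positivity), inv_mul_eq_div,
    le_div_iff₀ (Real.exp_pos x)]
  nlinarith [Real.exp_pos x]

lemma f0_anti : StrictAnti f0 := by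
  intro a b hab
  unfold f0
  apply div_lt_div_of_pos_left one_pos (by positivity)
  have := Real.exp_lt_exp.2 hab
  linarith

lemma n0_pos {y : ℝ} (hy : 0 < y) : 0 < n0 y := by
  unfold n0
  have h : (1:ℝ) < Real.exp y := by rw [← Real.exp_zero]; exact Real.exp_lt_exp.2 hy
  have : 0 < Real.exp y - 1 := by linarith
  positivity

/-! ### Elementary exponential inequalities -/

lemma le_four_exp {t : ℝ} (ht : 0 ≤ t) : t ≤ 4 * Real.exp (t / 4) := by
  have h := Real.add_one_le_exp (t / 4)
  nlinarith [Real.exp_pos (t/4)]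

lemma sq_le_exp {t : ℝ} (ht : 0 ≤ t) : t ^ 2 ≤ 16 * Real.exp (t / 2) := by
  have h := le_four_exp ht
  have h2 : Real.exp (t/4) * Real.exp (t/4) = Real.exp (t/2) := by
    rw [← Real.exp_add]; ring_nf
  nlinarith [Real.exp_pos (t/4)]

lemma exp_sub_one_ge {t : ℝ} (ht : 0 ≤ t) : t / 4 * Real.exp (3 * t / 4) ≤ Real.exp t - 1 := by
  have h1 : Real.exp (3*t/4) * Real.exp (t/4) = Real.exp t := by
    rw [← Real.exp_add]; ring_nf
  have h2 : Real.exp (3*t/4) ≥ 1 := by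
    rw [← Real.exp_zero]; exact Real.exp_le_exp.2 (by linarith)
  have h3 := Real.add_one_le_exp (t/4)
  nlinarith [Real.exp_pos (3*t/4)]

/-! ### Reflection identities -/

lemma n0_neg (y : ℝ) (hy : y ≠ 0) : n0 (-y) = -1 - n0 y := by
  unfold n0
  have h1 : Real.exp y - 1 ≠ 0 := by
    intro h; apply hy
    have : Real.exp y = Real.exp 0 := by rw [Real.exp_zero]; linarith
    exact Real.exp_injective this
  have h2 : Real.exp (-y) - 1 ≠ 0 := by
    intro h; apply hy
    have : Real.exp (-y) = Real.exp 0 := by rw [Real.exp_zero]; linarith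
    have := Real.exp_injective this; linarith
  have h3 : Real.exp (-y) * Real.exp y = 1 := by rw [← Real.exp_add]; simp
  field_simp
  nlinarith

lemma f0_neg (u : ℝ) : f0 (-u) = 1 - f0 u := by
  unfold f0
  have h3 : Real.exp (-u) * Real.exp u = 1 := by rw [← Real.exp_add]; simp
  have := Real.exp_pos u; have := Real.exp_pos (-u)
  field_simp
  nlinarith

lemma k0_of_neg (x y : ℝ) (hy : y < 0) :
    k0 x y = (n0 (-y) + f0 (-y - x)) * y ^ 2 := by
  unfold k0
  rw [Real.sign_of_neg hy, n0_neg y hy.ne]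
  have : f0 (-y - x) = 1 - f0 (y + x) := by
    rw [show -y - x = -(y+x) by ring, f0_neg]
  rw [this]; ring

/-! ### Positivity and exponential bound for `k0` -/

lemma k0_nonneg (x y : ℝ) : 0 ≤ k0 x y := by
  rcases lt_trichotomy y 0 with hy | hy | hy
  · rw [k0_of_neg x y hy]
    have := n0_pos (by linarith : (0:ℝ) < -y)
    have := f0_pos (-y - x)
    positivity
  · simp [k0, hy]
  · unfold k0
    rw [Real.sign_of_pos hy]
    have := n0_pos hy
    have := f0_pos (y + x)
    positivity

lemma k0_bound_pos (x y : ℝ) (hy : 0 ≤ y) :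
    (n0 y + f0 (y + x)) * y ^ 2 ≤ 16 * (1 + Real.exp (-x)) * Real.exp (-(y / 2)) := by
  rcases eq_or_lt_of_le hy with h | hy
  · simp [← h]; positivity
  have h2 : 0 < Real.exp y - 1 := by
    have : (1:ℝ) < Real.exp y := by rw [← Real.exp_zero]; exact Real.exp_lt_exp.2 hy
    linarith
  have e1 : Real.exp (-(y/2)) * Real.exp (3*y/4) = Real.exp (y/4) := by
    rw [← Real.exp_add]; ring_nf
  have hn : n0 y * y ^ 2 ≤ 16 * Real.exp (-(y/2)) := by
    have hrw : n0 y * y ^ 2 = y ^ 2 / (Real.exp y - 1) := by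
      unfold n0; field_simp
    rw [hrw, div_le_iff₀ h2]
    nlinarith [mul_le_mul_of_nonneg_left (exp_sub_one_ge hy.le)
        (by positivity : (0:ℝ) ≤ 16 * Real.exp (-(y/2))),
      mul_le_mul_of_nonneg_left (le_four_exp hy.le) hy.le,
      Real.exp_pos (y/4), e1]
  have hf : f0 (y + x) * y ^ 2 ≤ 16 * Real.exp (-x) * Real.exp (-(y/2)) := by
    have h3 : f0 (y + x) ≤ Real.exp (-x) * Real.exp (-y) := by
      rw [← Real.exp_add]
      have := f0_le_exp_neg (y + x)
      calc f0 (y+x) ≤ Real.exp (-(y+x)) := this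
        _ = Real.exp (-x + -y) := by ring_nf
    have h4 := sq_le_exp hy.le
    have e2 : Real.exp (-y) * Real.exp (y/2) = Real.exp (-(y/2)) := by
      rw [← Real.exp_add]; ring_nf
    nlinarith [Real.exp_pos (-x), Real.exp_pos (-y), Real.exp_pos (y/2), sq_nonneg y,
      mul_le_mul h3 h4 (by positivity) (by positivity)]
  nlinarith [hn, hf]

lemma k0_le (x y : ℝ) :
    k0 x y ≤ 16 * (1 + Real.exp x + Real.exp (-x)) * Real.exp (-(|y| / 2)) := by
  rcases lt_trichotomy y 0 with hy | hy | hy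
  · rw [k0_of_neg x y hy, abs_of_neg hy]
    have h := k0_bound_pos (-x) (-y) (by linarith)
    have : (n0 (-y) + f0 (-y + -x)) * (-y) ^ 2 ≤ 16 * (1 + Real.exp x) * Real.exp (-(-y/2)) := by
      simpa using h
    have hx := Real.exp_pos (-x); have hy2 := Real.exp_pos (-(-y/2))
    calc (n0 (-y) + f0 (-y - x)) * y ^ 2 = (n0 (-y) + f0 (-y + -x)) * (-y) ^ 2 := by ring_nf
      _ ≤ 16 * (1 + Real.exp x) * Real.exp (-(-y/2)) := this
      _ ≤ 16 * (1 + Real.exp x + Real.exp (-x)) * Real.exp (-(-y/2)) := by nlinarith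
  · simp [k0, hy]; positivity
  · unfold k0
    rw [Real.sign_of_pos hy, abs_of_pos hy, mul_one]
    have h := k0_bound_pos x y hy.le
    have := Real.exp_pos x; have := Real.exp_pos (-(y/2))
    calc (n0 y + f0 (y + x)) * y ^ 2 ≤ 16 * (1 + Real.exp (-x)) * Real.exp (-(y/2)) := h
      _ ≤ 16 * (1 + Real.exp x + Real.exp (-x)) * Real.exp (-(y/2)) := by nlinarith

/-! ### Integrability of `k0 x` -/

lemma integrable_exp_neg_abs_half : Integrable (fun y : ℝ => Real.exp (-(|y| / 2))) := by
  have hIoi : ∀ c : ℝ, IntegrableOn (fun y : ℝ => Real.exp (-(|y| / 2))) (Set.Ioi c) := by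
    intro c
    apply (exp_neg_integrableOn_Ioi c (by norm_num : (0:ℝ) < 1/2)).mono'
    · exact (((measurable_abs).div_const 2).neg).exp.aestronglyMeasurable
    · filter_upwards [ae_restrict_mem measurableSet_Ioi] with y (hy : c < y)
      rw [Real.norm_eq_abs, abs_of_pos (Real.exp_pos _), Real.exp_le_exp]
      rw [neg_mul]
      have : y ≤ |y| := le_abs_self y
      linarith
  rw [← integrableOn_univ, ← @Set.Iio_union_Ici _ _ (0 : ℝ), integrableOn_union,
    integrableOn_Ici_iff_integrableOn_Ioi]
  refine ⟨?_, hIoi 0⟩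
  rw [← (Measure.measurePreserving_neg (volume : Measure ℝ)).integrableOn_comp_preimage
      (Homeomorph.neg ℝ).measurableEmbedding]
  simp only [Function.comp_def, abs_neg, Set.neg_preimage, Set.neg_Iio, neg_zero]
  exact hIoi 0

lemma measurable_f0 : Measurable f0 := by
  unfold f0; exact (measurable_const.div ((Real.measurable_exp).add measurable_const))

lemma measurable_n0 : Measurable n0 := by
  unfold n0; exact (measurable_const.div ((Real.measurable_exp).sub measurable_const))

lemma measurable_real_sign : Measurable Real.sign := by
  unfold Real.sign
  exact Measurable.ite (measurableSet_lt measurable_id measurable_const) measurable_const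
    (Measurable.ite (measurableSet_lt measurable_const measurable_id) measurable_const
      measurable_const)

lemma measurable_k0 : Measurable (Function.uncurry k0) := by
  unfold Function.uncurry k0
  apply Measurable.mul
  apply Measurable.mul
  · exact ((measurable_n0.comp measurable_snd).add
      (measurable_f0.comp (measurable_snd.add measurable_fst)))
  · exact (measurable_snd.pow measurable_const)
  · exact measurable_real_sign.comp measurable_snd

lemma integrable_k0 (x : ℝ) : Integrable (k0 x) := by
  apply Integrable.mono' (integrable_exp_neg_abs_half.const_mul
    (16 * (1 + Real.exp x + Real.exp (-x))))
  · exact (measurable_k0.comp (measurable_const.prodMk measurable_id)).aestronglyMeasurable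
  · filter_upwards with y
    rw [Real.norm_eq_abs, abs_of_nonneg (k0_nonneg x y)]
    exact k0_le x y

/-! ### Lower bound for `gamma0` -/

lemma setIntegral_sq (a b : ℝ) (hab : a ≤ b) (c : ℝ) :
    ∫ y in Set.Ioc a b, c * y ^ 2 = c * (b ^ 3 - a ^ 3) / 3 := by
  rw [← intervalIntegral.integral_of_le hab, intervalIntegral.integral_const_mul,
    integral_pow]
  norm_num; ring

lemma gamma0_lower (x : ℝ) : f0 1 / 3 * (1 + |x|) ^ 3 ≤ gamma0 x := by
  have hf1 : 0 < f0 1 := f0_pos 1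
  have main : ∀ S : Set ℝ, MeasurableSet S →
      (∀ y ∈ S, f0 1 * y ^ 2 ≤ k0 x y) →
      IntegrableOn (fun y => f0 1 * y ^ 2) S volume →
      (∫ y in S, f0 1 * y ^ 2) ≤ gamma0 x := by
    intro S hS hle hint
    calc (∫ y in S, f0 1 * y ^ 2) ≤ ∫ y in S, k0 x y :=
          setIntegral_mono_on hint ((integrable_k0 x).integrableOn) hS hle
      _ ≤ gamma0 x := setIntegral_le_integral (integrable_k0 x)
          (Filter.Eventually.of_forall (k0_nonneg x))
  rcases le_total x 0 with hx | hx
  · have habs : (1:ℝ) + |x| = 1 - x := by rw [abs_of_nonpos hx]; ring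
    have hb : (0:ℝ) ≤ 1 - x := by linarith
    have h1 := setIntegral_sq 0 (1 - x) hb (f0 1)
    have h2 := main (Set.Ioc 0 (1 - x)) measurableSet_Ioc ?_ ?_
    · rw [h1] at h2
      rw [habs]
      calc f0 1 / 3 * (1 - x) ^ 3 = f0 1 * ((1-x) ^ 3 - 0 ^ 3) / 3 := by ring
        _ ≤ gamma0 x := h2
    · intro y hy
      obtain ⟨hy1, hy2⟩ := hy
      have hs : Real.sign y = 1 := Real.sign_of_pos hy1
      have hmono : f0 1 ≤ f0 (y + x) := f0_anti.antitone (by linarith)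
      have hn := n0_pos hy1
      unfold k0; rw [hs]
      nlinarith [sq_nonneg y]
    · exact (Continuous.integrableOn_Ioc (continuous_const.mul (continuous_pow 2)))
  · have habs : (1:ℝ) + |x| = 1 + x := by rw [abs_of_nonneg hx]
    have hb : -(1 + x) ≤ (0:ℝ) := by linarith
    have h1 := setIntegral_sq (-(1+x)) 0 hb (f0 1)
    have h2 := main (Set.Ioc (-(1+x)) 0) measurableSet_Ioc ?_ ?_
    · rw [h1] at h2
      rw [habs]
      calc f0 1 / 3 * (1 + x) ^ 3 = f0 1 * ((0:ℝ) ^ 3 - (-(1+x)) ^ 3) / 3 := by ring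
        _ ≤ gamma0 x := h2
    · intro y hy
      obtain ⟨hy1, hy2⟩ := hy
      rcases eq_or_lt_of_le hy2 with h | h
      · simp [h, k0_nonneg]
      · rw [k0_of_neg x y h]
        have hmono : f0 1 ≤ f0 (-y - x) := f0_anti.antitone (by linarith)
        have hn := n0_pos (by linarith : (0:ℝ) < -y)
        nlinarith [sq_nonneg y]
    · exact (Continuous.integrableOn_Ioc (continuous_const.mul (continuous_pow 2)))

lemma gamma0_pos (x : ℝ) : 0 < gamma0 x := by
  have hf1 := f0_pos 1
  have h : (0:ℝ) < f0 1 / 3 * (1 + |x|) ^ 3 := by positivity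
  linarith [gamma0_lower x]

lemma measurable_gamma0 : Measurable gamma0 := by
  exact (MeasureTheory.StronglyMeasurable.integral_prod_right' (ν := volume)
    measurable_k0.stronglyMeasurable).measurable

lemma integrable_inv_gamma0 : Integrable (fun x => 1 / gamma0 x) := by
  have hf1 := f0_pos 1
  apply Integrable.mono' (integrable_inv_one_add_sq.const_mul (3 / f0 1))
  · exact (measurable_const.div measurable_gamma0).aestronglyMeasurable
  · filter_upwards with x
    rw [Real.norm_eq_abs, abs_of_pos (one_div_pos.mpr (gamma0_pos x))]
    have hcube : 1 + x ^ 2 ≤ (1 + |x|) ^ 3 := by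
      have h0 : 0 ≤ |x| := abs_nonneg x
      have h1 : x ^ 2 = |x| ^ 2 := (sq_abs x).symm
      nlinarith
    have hg : f0 1 / 3 * (1 + x ^ 2) ≤ gamma0 x := by
      calc f0 1 / 3 * (1 + x ^ 2) ≤ f0 1 / 3 * (1 + |x|) ^ 3 := by nlinarith
        _ ≤ gamma0 x := gamma0_lower x
    have hgp := gamma0_pos x
    have key : 1 / gamma0 x ≤ 3 / f0 1 * (1 / (1 + x ^ 2)) := by
      rw [div_le_iff₀ hgp]
      have e1 : (3 / f0 1 * (1 / (1 + x ^ 2))) * (f0 1 / 3 * (1 + x ^ 2)) = 1 := by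
        field_simp
      nlinarith [mul_le_mul_of_nonneg_left hg
        (by positivity : (0:ℝ) ≤ 3 / f0 1 * (1 / (1 + x ^ 2)))]
    simpa [one_div] using key

/-! ### The bound `s⁴ / sinh(s/2)² ≤ 4096` -/

lemma sinh_quotient_le (s : ℝ) : s ^ 4 / Real.sinh (s / 2) ^ 2 ≤ 4096 := by
  have main : ∀ t : ℝ, 0 ≤ t → t ^ 4 / Real.sinh (t / 2) ^ 2 ≤ 4096 := by
    intro t ht
    rcases eq_or_lt_of_le ht with h | h
    · simp [← h]
    · have hsinh : t / 16 * Real.exp (3 * t / 8) ≤ Real.sinh (t / 2) := by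
        rw [Real.sinh_eq]
        have h1 := exp_sub_one_ge (by linarith : (0:ℝ) ≤ t / 2)
        have h2 : Real.exp (-(t/2)) ≤ 1 := by
          rw [← Real.exp_zero]; exact Real.exp_le_exp.2 (by linarith)
        have h3 : (3 : ℝ) * (t / 2) / 4 = 3 * t / 8 := by ring
        rw [h3] at h1
        linarith
      have hs2 : 0 < Real.sinh (t / 2) := by
        have : 0 < t / 16 * Real.exp (3 * t / 8) := by positivity
        linarith
      rw [div_le_iff₀ (by positivity)]
      have hq := sq_le_exp ht
      have he : Real.exp (t / 2) ≤ Real.exp (3 * t / 4) := Real.exp_le_exp.2 (by linarith)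
      have hee : Real.exp (3 * t / 8) * Real.exp (3 * t / 8) = Real.exp (3 * t / 4) := by
        rw [← Real.exp_add]; ring_nf
      have hq2 : t ^ 2 ≤ 16 * Real.exp (3 * t / 4) := by nlinarith
      nlinarith [mul_le_mul hsinh hsinh (by positivity) hs2.le, sq_nonneg t,
        Real.exp_pos (3 * t / 8), Real.exp_pos (3 * t / 4),
        mul_le_mul_of_nonneg_left hq2 (sq_nonneg t)]
  rcases le_total 0 s with hs | hs
  · exact main s hs
  · have hm := main (-s) (by linarith)
    have hneg : Real.sinh (-s / 2) ^ 2 = Real.sinh (s / 2) ^ 2 := by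
      rw [show (-s : ℝ) / 2 = -(s/2) by ring, Real.sinh_neg]; ring
    rw [hneg] at hm
    calc s ^ 4 / Real.sinh (s/2) ^ 2 = (-s) ^ 4 / Real.sinh (s/2) ^ 2 := by ring_nf
      _ ≤ 4096 := hm

/-! ### The key algebraic identity -/

lemma w_eq (x : ℝ) : w x = Real.exp x / (Real.exp x + 1) ^ 2 := by
  have h2 : Real.exp x + 1 ≠ 0 := by positivity
  unfold w f0; field_simp; ring

set_option maxHeartbeats 1600000 in
lemma key_identity (x y : ℝ) :
    w x * K0bar x y ^ 2 / w y = (x - y) ^ 4 / (4 * Real.sinh ((x - y) / 2) ^ 2) := by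
  rcases eq_or_ne y x with h | h
  · subst h
    simp [K0bar, sub_self, Real.sign_zero]
  · have hA := Real.exp_pos x
    have hB := Real.exp_pos y
    have hBA : Real.exp y ≠ Real.exp x := fun hc => h (Real.exp_injective hc)
    have h4 : Real.exp y - Real.exp x ≠ 0 := sub_ne_zero.2 hBA
    have h2 : Real.exp x + 1 ≠ 0 := by positivity
    have h3 : Real.exp y + 1 ≠ 0 := by positivity
    have hsgn : Real.sign (y - x) ^ 2 = 1 := by
      rcases Real.sign_apply_eq_of_ne_zero (y - x) (sub_ne_zero.2 h) with hs | hs <;>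
        rw [hs] <;> norm_num
    have hsinh : Real.sinh ((x - y) / 2) ^ 2 =
        (Real.exp x - Real.exp y) ^ 2 / (4 * Real.exp x * Real.exp y) := by
      have hc : Real.cosh (2 * ((x - y) / 2)) = 2 * Real.sinh ((x - y) / 2) ^ 2 + 1 := by
        rw [Real.cosh_two_mul, Real.cosh_sq]; ring
      rw [show 2 * ((x - y) / 2) = x - y by ring] at hc
      rw [Real.cosh_eq, neg_sub, Real.exp_sub, Real.exp_sub] at hc
      field_simp at hc ⊢
      nlinarith [hc]
    have hn : n0 (y - x) + f0 y =
        Real.exp y * (Real.exp x + 1) /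
          ((Real.exp y - Real.exp x) * (Real.exp y + 1)) := by
      unfold n0 f0
      rw [Real.exp_sub]
      rw [div_sub_one hA.ne']
      rw [one_div_div]
      field_simp
      ring
    unfold K0bar
    rw [hn, mul_pow, mul_pow, hsgn, w_eq, w_eq, hsinh, mul_one]
    rw [show x - y = -(y - x) by ring]
    generalize y - x = s
    generalize Real.exp x = A at *
    generalize Real.exp y = B at *
    have h4' : A - B ≠ 0 := fun hc => h4 (by linarith [hc])
    have hA' : A ≠ 0 := ne_of_gt hA
    have hB' : B ≠ 0 := ne_of_gt hB
    field_simp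
    ring

lemma khat_sq (x y : ℝ) :
    Khat0 x y ^ 2 =
      1 / 4 * ((x - y) ^ 4 / Real.sinh ((x - y) / 2) ^ 2 *
        (1 / (gamma0 x * gamma0 y))) := by
  have hwx := w_pos x
  have hwy := w_pos y
  have hgx := gamma0_pos x
  have hgy := gamma0_pos y
  have h1 : Khat0 x y ^ 2 =
      (w x * gamma0 x) * (K0bar x y / gamma0 x) ^ 2 / (w y * gamma0 y) := by
    unfold Khat0
    rw [div_pow, mul_pow, Real.sq_sqrt (by positivity), Real.sq_sqrt (by positivity)]
  rw [h1]
  have h2 : (w x * gamma0 x) * (K0bar x y / gamma0 x) ^ 2 / (w y * gamma0 y) =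
      (w x * K0bar x y ^ 2 / w y) * (1 / (gamma0 x * gamma0 y)) := by
    field_simp
  rw [h2, key_identity]
  field_simp

/-! ### Main theorem -/

theorem hilbert_schmidt_bound :
    Integrable (fun p : ℝ × ℝ =>
      (p.1 - p.2) ^ 4 / Real.sinh ((p.1 - p.2) / 2) ^ 2 * (1 / (gamma0 p.1 * gamma0 p.2)))
      (volume : Measure (ℝ × ℝ)) ∧
    Integrable (fun p : ℝ × ℝ => (Khat0 p.1 p.2) ^ 2) (volume : Measure (ℝ × ℝ)) := by
  have hmeas : AEStronglyMeasurable (fun p : ℝ × ℝ =>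
      (p.1 - p.2) ^ 4 / Real.sinh ((p.1 - p.2) / 2) ^ 2 * (1 / (gamma0 p.1 * gamma0 p.2)))
      (volume : Measure (ℝ × ℝ)) := by
    apply Measurable.aestronglyMeasurable
    exact (((measurable_fst.sub measurable_snd).pow measurable_const).div
        ((((measurable_fst.sub measurable_snd).div_const 2).sinh).pow measurable_const)).mul
      (measurable_const.div ((measurable_gamma0.comp measurable_fst).mul
        (measurable_gamma0.comp measurable_snd)))
  have hdom : Integrable (fun p : ℝ × ℝ =>
      4096 * ((1 / gamma0 p.1) * (1 / gamma0 p.2))) (volume : Measure (ℝ × ℝ)) := by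
    rw [MeasureTheory.Measure.volume_eq_prod]
    exact (integrable_inv_gamma0.mul_prod integrable_inv_gamma0).const_mul 4096
  have h1 : Integrable (fun p : ℝ × ℝ =>
      (p.1 - p.2) ^ 4 / Real.sinh ((p.1 - p.2) / 2) ^ 2 * (1 / (gamma0 p.1 * gamma0 p.2)))
      (volume : Measure (ℝ × ℝ)) := by
    apply Integrable.mono' hdom hmeas
    filter_upwards with p
    have hgx := gamma0_pos p.1
    have hgy := gamma0_pos p.2
    have hq := sinh_quotient_le (p.1 - p.2)
    have hq0 : 0 ≤ (p.1 - p.2) ^ 4 / Real.sinh ((p.1 - p.2) / 2) ^ 2 := by positivity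
    have hg0 : (0:ℝ) < 1 / (gamma0 p.1 * gamma0 p.2) := by positivity
    rw [Real.norm_eq_abs, abs_of_nonneg (by positivity)]
    calc (p.1 - p.2) ^ 4 / Real.sinh ((p.1 - p.2) / 2) ^ 2 * (1 / (gamma0 p.1 * gamma0 p.2))
        ≤ 4096 * (1 / (gamma0 p.1 * gamma0 p.2)) :=
          mul_le_mul_of_nonneg_right hq hg0.le
      _ = 4096 * ((1 / gamma0 p.1) * (1 / gamma0 p.2)) := by ring
  refine ⟨h1, ?_⟩
  have heq : (fun p : ℝ × ℝ => (Khat0 p.1 p.2) ^ 2) =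
      (fun p : ℝ × ℝ => 1 / 4 *
        ((p.1 - p.2) ^ 4 / Real.sinh ((p.1 - p.2) / 2) ^ 2 *
          (1 / (gamma0 p.1 * gamma0 p.2)))) := by
    funext p
    exact khat_sq p.1 p.2
  rw [heq]
  exact h1.const_mul _
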